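/- With J_γ^s as above, O_α the GKZ operators, r^α = v^α_0 - v^α_+, and the 'modified hyperexponent' F_γ(z) = Σ_{s ∈ Z^k_{≥0}} [(-1)^s / s!] J_{γ - s r}^s(z) (finite sum), one has (O_α + ∂²/∂z^{v^α_0}) F_γ = 0 for each α, i.e. F_γ solves the antisymmetrized GKZ (A-GKZ) system Ō_α F = 0 where Ō_α = O_α + ∂²/∂z^{v^α_0}. -/

import Mathlib

open MvPolynomial

/-! Write `∂^u` for `∂_a ∂_b` when `u = e_a + e_b`. Since `∂_x (z^e/e!) = z^{e-e_x}/(e-e_x)!`,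
differentiation only shifts the base point of a Horn sum: `∂^u J_γ^s = J_{γ-u}^s`. Writing
`v^α_- = v^α_+ - v^α` and substituting `t ↦ t + e_α` in `J_{γ-v^α_-}^s` turns `O_α J_γ^s` into a
single Horn sum with weight `(t+1)_s - (t)_s = s_α (t+1)_{s-e_α}`, i.e.
`O_α J_γ^s = s_α J_{γ-v^α_+}^{s-e_α}`. In `F_γ = Σ_s a_s J_{γ-sr}^s`, `a_s = (-1)^s/s!`, the
summand of index `s + e_α` is thus sent by `O_α` to
`a_{s+e_α} (s_α+1) J^s_{γ-sr-r^α-v^α_+} = -a_s J^s_{γ-sr-v^α_0} = -∂^{v^α_0}(a_s J_{γ-sr}^s)`,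
while summands with `s_α = 0` are killed; reindexing gives `O_α F_γ = -∂^{v^α_0} F_γ`. -/

/-- The exponent vector `γ + t·v = γ + t₁v¹ + … + t_k v^k`. -/
def expVec {N k : ℕ} (v : Fin k → Fin N → ℤ) (γ : Fin N → ℤ) (t : Fin k → ℤ) :
    Fin N → ℤ :=
  fun i => γ i + ∑ α, t α * v α i

/-- The Horn-type polynomial
`J_γ^s(z) = Σ_{t ∈ ℤ^k} (t+1)⋯(t+s) z^{γ+tv}/(γ+tv)!` (multi-index notation; terms
whose exponent vector has a negative coordinate vanish); `hfin` ensures the sum is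
finite. -/
noncomputable def Jpoly {N k : ℕ} (v : Fin k → Fin N → ℤ)
    (hfin : ∀ γ : Fin N → ℤ, {t : Fin k → ℤ | ∀ i, 0 ≤ expVec v γ t i}.Finite)
    (γ : Fin N → ℤ) (s : Fin k → ℕ) : MvPolynomial (Fin N) ℚ :=
  ∑ t ∈ (hfin γ).toFinset,
    ((∏ α, ∏ m ∈ Finset.range (s α), ((t α : ℚ) + m + 1)) *
        ((∏ i, (expVec v γ t i).toNat.factorial : ℕ) : ℚ)⁻¹) •
      monomial (Finsupp.equivFunOnFinite.symm fun i => (expVec v γ t i).toNat) (1 : ℚ)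

/-- The modified hyperexponent `F_γ = Σ_{s ∈ ℤ^k_{≥0}} ((-1)^s / s!) J_{γ - s r}^s`,
a finite sum: `hS` records that only finitely many `s` contribute a nonzero term. -/
noncomputable def FF {N k : ℕ} (v : Fin k → Fin N → ℤ)
    (hfin : ∀ γ : Fin N → ℤ, {t : Fin k → ℤ | ∀ i, 0 ≤ expVec v γ t i}.Finite)
    (γ : Fin N → ℤ) (r : Fin k → Fin N → ℤ)
    (hS : {s : Fin k → ℕ |
        Jpoly v hfin (fun i => γ i - ∑ β, (s β : ℤ) * r β i) s ≠ 0}.Finite) :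
    MvPolynomial (Fin N) ℚ :=
  ∑ s ∈ hS.toFinset,
    ((-1 : ℚ) ^ (∑ β, s β) * ((∏ β, (s β).factorial : ℕ) : ℚ)⁻¹) •
      Jpoly v hfin (fun i => γ i - ∑ β, (s β : ℤ) * r β i) s

section DividedMonomial

variable {σ : Type*} [Fintype σ]

/-- `z^e / e!`, taken to be `0` when `e` has a negative coordinate: with this convention
`∂_x (z^e / e!) = z^{e - e_x} / (e - e_x)!` holds for every `e`. -/
noncomputable def dividedMonomial (e : σ → ℤ) : MvPolynomial σ ℚ :=
  if ∀ i, 0 ≤ e i then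
    ((∏ i, (e i).toNat.factorial : ℕ) : ℚ)⁻¹ •
      monomial (Finsupp.equivFunOnFinite.symm fun i => (e i).toNat) 1
  else 0

lemma dividedMonomial_eq_zero {e : σ → ℤ} {i : σ} (hi : e i < 0) : dividedMonomial e = 0 :=
  if_neg fun he => (he i).not_gt hi

variable [DecidableEq σ]

lemma prod_factorial_toNat_eq_mul {e : σ → ℤ} {x : σ} (hx : 1 ≤ e x) :
    ∏ i, (e i).toNat.factorial =
      (e x).toNat * ∏ i, ((e - Pi.single x 1 : σ → ℤ) i).toNat.factorial := by
  rw [Fintype.prod_eq_mul_prod_compl x, Fintype.prod_eq_mul_prod_compl x, ← mul_assoc]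
  congr 1
  · have : (e x - 1).toNat = (e x).toNat - 1 := by omega
    simp [this, Nat.mul_factorial_pred (show (e x).toNat ≠ 0 by omega)]
  · refine Finset.prod_congr rfl fun i hi => ?_
    simp [show i ≠ x by simpa using hi]

lemma pderiv_dividedMonomial (x : σ) (e : σ → ℤ) :
    pderiv x (dividedMonomial e) = dividedMonomial (e - Pi.single x 1) := by
  by_cases he : ∀ i, 0 ≤ e i
  swap
  · obtain ⟨i, hi⟩ := not_forall.mp he
    rw [dividedMonomial_eq_zero (not_le.mp hi), map_zero, dividedMonomial_eq_zero (i := i)]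
    rcases eq_or_ne i x with rfl | h <;> simp [*] <;> omega
  rw [dividedMonomial, if_pos he, (pderiv x).map_smul, pderiv_monomial]
  by_cases hx : e x = 0
  · rw [dividedMonomial_eq_zero (i := x) (by simp [hx])]
    simp [hx]
  have hx1 : 1 ≤ e x := by have := he x; omega
  have he' : ∀ i, 0 ≤ (e - Pi.single x 1 : σ → ℤ) i := fun i => by
    by_cases h : i = x <;> simp [h, he i, hx1]
  have hexp : (Finsupp.equivFunOnFinite.symm fun i => (e i).toNat) - Finsupp.single x 1 =
      Finsupp.equivFunOnFinite.symm fun i => ((e - Pi.single x 1 : σ → ℤ) i).toNat := by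
    ext i
    by_cases h : i = x <;> simp [h]
  rw [dividedMonomial, if_pos he', hexp, prod_factorial_toNat_eq_mul hx1, smul_monomial,
    smul_monomial]
  have hx0 : ((e x).toNat : ℚ) ≠ 0 := by exact_mod_cast (by omega : (e x).toNat ≠ 0)
  congr 1
  simp [field]

end DividedMonomial

lemma prod_range_add_one_sub_prod_range {R : Type*} [CommRing R] (n : ℕ) (x : R) :
    ∏ m ∈ Finset.range n, (x + m + 1) - ∏ m ∈ Finset.range n, (x - 1 + m + 1) =
      n * ∏ m ∈ Finset.range (n - 1), (x + m + 1) := by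
  cases n with
  | zero => simp
  | succ n =>
    rw [Finset.prod_range_succ, Finset.prod_range_succ', Nat.add_sub_cancel,
      Finset.prod_congr rfl (f := fun m : ℕ => x - 1 + ((m + 1 : ℕ) : R) + 1)
        (g := fun m : ℕ => x + m + 1) fun m _ => by push_cast; ring]
    push_cast
    ring

section RisingWeight

variable {k : ℕ}

def risingWeight (s : Fin k → ℕ) (t : Fin k → ℤ) : ℚ :=
  ∏ α, ∏ m ∈ Finset.range (s α), ((t α : ℚ) + m + 1)

lemma risingWeight_eq_mul_prod_compl {s s' : Fin k → ℕ} {t t' : Fin k → ℤ}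
    (α : Fin k) (hs : ∀ β ≠ α, s' β = s β) (ht : ∀ β ≠ α, t' β = t β) :
    risingWeight s' t' = (∏ m ∈ Finset.range (s' α), ((t' α : ℚ) + m + 1)) *
      ∏ β ∈ {α}ᶜ, ∏ m ∈ Finset.range (s β), ((t β : ℚ) + m + 1) := by
  rw [risingWeight, Fintype.prod_eq_mul_prod_compl α]
  refine congrArg _ (Finset.prod_congr rfl fun β hβ => ?_)
  have hβ : β ≠ α := by simpa using hβ
  rw [hs β hβ, ht β hβ]

lemma risingWeight_sub_risingWeight_sub_single (s : Fin k → ℕ) (t : Fin k → ℤ)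
    (α : Fin k) :
    risingWeight s t - risingWeight s (t - Pi.single α 1) =
      s α * risingWeight (s - Pi.single α 1) t := by
  rw [risingWeight_eq_mul_prod_compl (s := s) (t := t) α (fun _ _ => rfl) (fun _ _ => rfl),
    risingWeight_eq_mul_prod_compl (s := s) (t := t) α (fun _ _ => rfl)
      (fun β hβ => by simp [hβ]),
    risingWeight_eq_mul_prod_compl (s := s) (t := t) α (fun β hβ => by simp [hβ])
      (fun _ _ => rfl), ← sub_mul]
  simp only [Pi.sub_apply, Pi.single_eq_same, Int.cast_sub, Int.cast_one]
  rw [prod_range_add_one_sub_prod_range, mul_assoc]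

end RisingWeight

lemma finsum_comp_add_single {ι M : Type*} [DecidableEq ι] [AddCommMonoid M]
    {f : (ι → ℕ) → M} (α : ι) (hf : ∀ s, s α = 0 → f s = 0) :
    ∑ᶠ s, f (s + (Pi.single α 1 : ι → ℕ)) = ∑ᶠ s, f s := by
  rw [← finsum_mem_range (add_left_injective (Pi.single α 1 : ι → ℕ))]
  conv_rhs => rw [← finsum_mem_univ]
  refine finsum_mem_inter_support_eq' f _ _ fun s hs => iff_of_true ?_ trivial
  have hsα : s α ≠ 0 := fun h => hs (hf s h)
  refine ⟨s - Pi.single α 1, funext fun β => ?_⟩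
  rcases eq_or_ne β α with rfl | hβ <;> simp [*]
  omega

section GKZ

variable {σ : Type*}

/-- `O_α` for the lattice vector `v^α = e_a + e_b - e_c - e_d`. -/
noncomputable def gkzOperator (a b c d : σ) : MvPolynomial σ ℚ →ₗ[ℚ] MvPolynomial σ ℚ :=
  (pderiv a).toLinearMap ∘ₗ (pderiv b).toLinearMap -
    (pderiv c).toLinearMap ∘ₗ (pderiv d).toLinearMap

lemma gkzOperator_apply (a b c d : σ) (p : MvPolynomial σ ℚ) :
    gkzOperator a b c d p = pderiv a (pderiv b p) - pderiv c (pderiv d p) :=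
  rfl

end GKZ

section HornSum

variable {N k : ℕ} (v : Fin k → Fin N → ℤ)

noncomputable def hornSum (γ : Fin N → ℤ) (c : (Fin k → ℤ) → ℚ) : MvPolynomial (Fin N) ℚ :=
  ∑ᶠ t, c t • dividedMonomial (expVec v γ t)

lemma expVec_sub_single (γ : Fin N → ℤ) (x : Fin N) (t : Fin k → ℤ) :
    expVec v (γ - Pi.single x 1) t = expVec v γ t - Pi.single x 1 := by
  ext i
  simp only [expVec, Pi.sub_apply]
  ring

lemma expVec_add_vec (γ : Fin N → ℤ) (α : Fin k) (t : Fin k → ℤ) :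
    expVec v (γ + v α) t = expVec v γ (t + Pi.single α 1) := by
  ext i
  simp [expVec, add_mul, Finset.sum_add_distrib, Pi.single_apply]
  ring

lemma support_hornSum_term_subset (γ : Fin N → ℤ) (c : (Fin k → ℤ) → ℚ) :
    Function.support (fun t => c t • dividedMonomial (expVec v γ t)) ⊆
      {t | ∀ i, 0 ≤ expVec v γ t i} := fun t ht => by
  by_contra hneg
  obtain ⟨i, hi⟩ := not_forall.mp hneg
  exact ht (by simp [dividedMonomial_eq_zero (not_le.mp hi)])

lemma hasFiniteSupport_hornSum_term {γ : Fin N → ℤ}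
    (hγ : {t : Fin k → ℤ | ∀ i, 0 ≤ expVec v γ t i}.Finite) (c : (Fin k → ℤ) → ℚ) :
    Function.HasFiniteSupport fun t => c t • dividedMonomial (expVec v γ t) :=
  hγ.subset (support_hornSum_term_subset v γ c)

lemma pderiv_hornSum {γ : Fin N → ℤ}
    (hγ : {t : Fin k → ℤ | ∀ i, 0 ≤ expVec v γ t i}.Finite) (c : (Fin k → ℤ) → ℚ)
    (x : Fin N) :
    pderiv x (hornSum v γ c) = hornSum v (γ - Pi.single x 1) c := by
  rw [hornSum, map_finsum _ (hasFiniteSupport_hornSum_term v hγ c)]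
  simp only [Derivation.map_smul, pderiv_dividedMonomial, hornSum, expVec_sub_single]

lemma hornSum_add_vec (γ : Fin N → ℤ) (α : Fin k) (c : (Fin k → ℤ) → ℚ) :
    hornSum v (γ + v α) c = hornSum v γ fun t => c (t - Pi.single α 1) := by
  simp only [hornSum, expVec_add_vec]
  conv_rhs => rw [← finsum_comp_equiv (Equiv.addRight (Pi.single α 1))]
  simp

end HornSum

section Jpoly

variable {N k : ℕ} (v : Fin k → Fin N → ℤ)
  (hfin : ∀ γ : Fin N → ℤ, {t : Fin k → ℤ | ∀ i, 0 ≤ expVec v γ t i}.Finite)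

lemma Jpoly_eq_hornSum (γ : Fin N → ℤ) (s : Fin k → ℕ) :
    Jpoly v hfin γ s = hornSum v γ (risingWeight s) := by
  rw [hornSum, finsum_eq_sum_of_support_subset _
    ((support_hornSum_term_subset v γ _).trans (hfin γ).coe_toFinset.symm.subset), Jpoly]
  refine Finset.sum_congr rfl fun t ht => ?_
  have ht : ∀ i, 0 ≤ expVec v γ t i := (hfin γ).mem_toFinset.mp ht
  rw [dividedMonomial, if_pos ht, mul_smul, risingWeight]

lemma pderiv_Jpoly (γ : Fin N → ℤ) (s : Fin k → ℕ) (x : Fin N) :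
    pderiv x (Jpoly v hfin γ s) = Jpoly v hfin (γ - Pi.single x 1) s := by
  rw [Jpoly_eq_hornSum, Jpoly_eq_hornSum, pderiv_hornSum v (hfin γ)]

lemma Jpoly_sub_Jpoly_add_vec (γ : Fin N → ℤ) (s : Fin k → ℕ) (α : Fin k) :
    Jpoly v hfin γ s - Jpoly v hfin (γ + v α) s =
      (s α : ℚ) • Jpoly v hfin γ (s - Pi.single α 1) := by
  rw [Jpoly_eq_hornSum, Jpoly_eq_hornSum, Jpoly_eq_hornSum, hornSum_add_vec, hornSum, hornSum,
    hornSum, ← finsum_sub_distrib (hasFiniteSupport_hornSum_term v (hfin γ) _)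
      (hasFiniteSupport_hornSum_term v (hfin γ) _), smul_finsum]
  simp only [← sub_smul, risingWeight_sub_risingWeight_sub_single, mul_smul]

lemma gkzOperator_Jpoly {A B C D : Fin N} {α : Fin k}
    (hvα : v α = Pi.single A 1 + Pi.single B 1 - Pi.single C 1 - Pi.single D 1)
    (γ : Fin N → ℤ) (s : Fin k → ℕ) :
    gkzOperator A B C D (Jpoly v hfin γ s) =
      (s α : ℚ) • Jpoly v hfin (γ - Pi.single B 1 - Pi.single A 1) (s - Pi.single α 1) := by
  have hγ : γ - Pi.single D 1 - Pi.single C 1 = γ - Pi.single B 1 - Pi.single A 1 + v α := by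
    rw [hvα]; abel
  simp only [gkzOperator_apply, pderiv_Jpoly]
  rw [hγ, Jpoly_sub_Jpoly_add_vec]

end Jpoly

section Hyperexponent

variable {N k : ℕ}

noncomputable def signedInvFactorial (s : Fin k → ℕ) : ℚ :=
  (-1 : ℚ) ^ (∑ β, s β) * ((∏ β, (s β).factorial : ℕ) : ℚ)⁻¹

lemma signedInvFactorial_add_single_mul (s : Fin k → ℕ) (α : Fin k) :
    signedInvFactorial (s + Pi.single α 1) * (s α + 1) = -signedInvFactorial s := by
  have hsum : ∑ β, (s + Pi.single α 1 : Fin k → ℕ) β = ∑ β, s β + 1 := by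
    simp [Finset.sum_add_distrib]
  have hprod : ∏ β, ((s + Pi.single α 1 : Fin k → ℕ) β).factorial =
      (s α + 1) * ∏ β, (s β).factorial := by
    rw [Fintype.prod_eq_mul_prod_compl α,
      Fintype.prod_eq_mul_prod_compl α (fun β => (s β).factorial), ← mul_assoc]
    congr 1
    · simp [Nat.factorial_succ]
    · exact Finset.prod_congr rfl fun β hβ => by simp [show β ≠ α by simpa using hβ]
  rw [signedInvFactorial, signedInvFactorial, hsum, hprod]
  push_cast
  field_simp
  ring

variable (v : Fin k → Fin N → ℤ)
  (hfin : ∀ γ : Fin N → ℤ, {t : Fin k → ℤ | ∀ i, 0 ≤ expVec v γ t i}.Finite)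
  (γ : Fin N → ℤ) (r : Fin k → Fin N → ℤ)

noncomputable def hyperexpTerm (s : Fin k → ℕ) : MvPolynomial (Fin N) ℚ :=
  signedInvFactorial s • Jpoly v hfin (fun i => γ i - ∑ β, (s β : ℤ) * r β i) s

lemma support_hyperexpTerm_subset :
    Function.support (hyperexpTerm v hfin γ r) ⊆
      {s | Jpoly v hfin (fun i => γ i - ∑ β, (s β : ℤ) * r β i) s ≠ 0} :=
  fun _ hs => right_ne_zero_of_smul hs

lemma FF_eq_finsum
    (hS : {s : Fin k → ℕ |
        Jpoly v hfin (fun i => γ i - ∑ β, (s β : ℤ) * r β i) s ≠ 0}.Finite) :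
    FF v hfin γ r hS = ∑ᶠ s, hyperexpTerm v hfin γ r s :=
  (finsum_eq_sum_of_support_subset _
    ((support_hyperexpTerm_subset v hfin γ r).trans hS.coe_toFinset.symm.subset)).symm

lemma sub_sum_mul_add_single (s : Fin k → ℕ) (α : Fin k) :
    (fun i => γ i - ∑ β, ((s + Pi.single α 1 : Fin k → ℕ) β : ℤ) * r β i) =
      (fun i => γ i - ∑ β, (s β : ℤ) * r β i) - r α := by
  ext i
  simp [add_mul, Finset.sum_add_distrib, Pi.single_apply]
  ring

variable {v} {γ} {r}

lemma gkzOperator_hyperexpTerm {A B C D : Fin N} {α : Fin k}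
    (hvα : v α = Pi.single A 1 + Pi.single B 1 - Pi.single C 1 - Pi.single D 1)
    (s : Fin k → ℕ) :
    gkzOperator A B C D (hyperexpTerm v hfin γ r s) =
      (signedInvFactorial s * s α) • Jpoly v hfin
        ((fun i => γ i - ∑ β, (s β : ℤ) * r β i) - Pi.single B 1 - Pi.single A 1)
        (s - Pi.single α 1) := by
  rw [hyperexpTerm, map_smul, gkzOperator_Jpoly v hfin hvα, smul_smul]

lemma gkzOperator_hyperexpTerm_add_single {A B C D P Q : Fin N} {α : Fin k}
    (hvα : v α = Pi.single A 1 + Pi.single B 1 - Pi.single C 1 - Pi.single D 1)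
    (hrα : r α = Pi.single P 1 + Pi.single Q 1 - Pi.single A 1 - Pi.single B 1)
    (s : Fin k → ℕ) :
    gkzOperator A B C D (hyperexpTerm v hfin γ r (s + Pi.single α 1)) =
      -pderiv P (pderiv Q (hyperexpTerm v hfin γ r s)) := by
  rw [gkzOperator_hyperexpTerm hfin hvα, add_tsub_cancel_right, sub_sum_mul_add_single]
  simp only [Pi.add_apply, Pi.single_eq_same, Nat.cast_add, Nat.cast_one,
    signedInvFactorial_add_single_mul, hyperexpTerm, Derivation.map_smul, pderiv_Jpoly, neg_smul]
  congr 3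
  rw [hrα]
  abel

end Hyperexponent

theorem stmt_18_general {N k : ℕ} (v : Fin k → Fin N → ℤ) (A B C D P Q : Fin k → Fin N)
    (hv : ∀ α i, v α i =
      ((if i = A α then 1 else 0) + (if i = B α then 1 else 0) -
        (if i = C α then 1 else 0) - (if i = D α then 1 else 0)))
    (r : Fin k → Fin N → ℤ)
    (hr : ∀ α i, r α i =
      ((if i = P α then 1 else 0) + (if i = Q α then 1 else 0) -
        (if i = A α then 1 else 0) - (if i = B α then 1 else 0)))
    (hfin : ∀ γ : Fin N → ℤ, {t : Fin k → ℤ | ∀ i, 0 ≤ expVec v γ t i}.Finite)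
    (γ : Fin N → ℤ)
    (hS : {s : Fin k → ℕ |
        Jpoly v hfin (fun i => γ i - ∑ β, (s β : ℤ) * r β i) s ≠ 0}.Finite)
    (α : Fin k) :
    pderiv (A α) (pderiv (B α) (FF v hfin γ r hS)) -
        pderiv (C α) (pderiv (D α) (FF v hfin γ r hS)) +
        pderiv (P α) (pderiv (Q α) (FF v hfin γ r hS)) = 0 := by
  have hvα : v α = Pi.single (A α) 1 + Pi.single (B α) 1 - Pi.single (C α) 1 -
      Pi.single (D α) 1 := funext fun i => by simp [hv, Pi.single_apply]
  have hrα : r α = Pi.single (P α) 1 + Pi.single (Q α) 1 - Pi.single (A α) 1 -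
      Pi.single (B α) 1 := funext fun i => by simp [hr, Pi.single_apply]
  have hfs : Function.HasFiniteSupport (hyperexpTerm v hfin γ r) :=
    hS.subset (support_hyperexpTerm_subset v hfin γ r)
  have hgkz : gkzOperator (A α) (B α) (C α) (D α) (FF v hfin γ r hS) =
      -pderiv (P α) (pderiv (Q α) (FF v hfin γ r hS)) := by
    rw [FF_eq_finsum, map_finsum _ hfs, ← finsum_comp_add_single α fun s hs => by
        rw [gkzOperator_hyperexpTerm hfin hvα, hs, Nat.cast_zero, mul_zero, zero_smul]]
    simp only [gkzOperator_hyperexpTerm_add_single hfin hvα hrα, finsum_neg_distrib]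
    exact congrArg _
      (map_finsum ((pderiv (P α)).toLinearMap ∘ₗ (pderiv (Q α)).toLinearMap) hfs).symm
  rw [← gkzOperator_apply, hgkz, neg_add_cancel]

/-- With `v^α = v^α_+ - v^α_-` (`v^α_+ = e_{Aα} + e_{Bα}`, `v^α_- = e_{Cα} + e_{Dα}`),
`v^α_0 = e_{Pα} + e_{Qα}` and `r^α = v^α_0 - v^α_+`, the modified hyperexponent
`F_γ = Σ_{s} ((-1)^s/s!) J_{γ-sr}^s` solves the antisymmetrized GKZ system:
`Ō_α F_γ = (O_α + ∂²/∂z^{v^α_0}) F_γ = 0` for every `α`. -/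
theorem stmt_18 {N k : ℕ} (v : Fin k → Fin N → ℤ) (A B C D P Q : Fin k → Fin N)
    (hAB : ∀ α, A α ≠ B α) (hCD : ∀ α, C α ≠ D α) (hPQ : ∀ α, P α ≠ Q α)
    (hv : ∀ α i, v α i =
      ((if i = A α then 1 else 0) + (if i = B α then 1 else 0) -
        (if i = C α then 1 else 0) - (if i = D α then 1 else 0)))
    (r : Fin k → Fin N → ℤ)
    (hr : ∀ α i, r α i =
      ((if i = P α then 1 else 0) + (if i = Q α then 1 else 0) -
        (if i = A α then 1 else 0) - (if i = B α then 1 else 0)))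
    (hfin : ∀ γ : Fin N → ℤ, {t : Fin k → ℤ | ∀ i, 0 ≤ expVec v γ t i}.Finite)
    (γ : Fin N → ℤ)
    (hS : {s : Fin k → ℕ |
        Jpoly v hfin (fun i => γ i - ∑ β, (s β : ℤ) * r β i) s ≠ 0}.Finite)
    (α : Fin k) :
    pderiv (A α) (pderiv (B α) (FF v hfin γ r hS)) -
        pderiv (C α) (pderiv (D α) (FF v hfin γ r hS)) +
        pderiv (P α) (pderiv (Q α) (FF v hfin γ r hS)) = 0 :=
  stmt_18_general v A B C D P Q hv r hr hfin γ hS α
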